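/- arXiv:2102.01359 — 5 statements merged into one kernel-verified Lean document; each statement's English description precedes it below -/
import Mathlib

section
/- Let R be a unital associative superalgebra over a commutative ring k in which 2 is invertible. Then the supercommutator span [R⊗Q1, R⊗Q1] (the k-span of all graded commutators [x,y] = xy − (−1)^{|x||y|}yx of homogeneous x,y ∈ R⊗Q1) equals (R⊗1) ⊕ ([R,R]⊗ν), where [R,R] is the span of supercommutators in R. -/
variable {k : Type} [CommRing k] [Invertible (2 : k)]
variable {R : Type} [Ring R] [Algebra k R]

/-- The multiplication of the graded tensor product `R ⊗ Q1`, in the model where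
`(a, b)` represents `a ⊗ 1 + b ⊗ ν` (with `ν` odd, `ν² = 1`, and Koszul signs
implemented via the grading involution `σ` of `R`). -/
def mulQ (σ : R ≃ₐ[k] R) (p q : R × R) : R × R :=
  (p.1 * q.1 + p.2 * σ q.2, p.1 * q.2 + p.2 * σ q.1)

/-- The grading involution of `R ⊗ Q1` in the model above: `a ⊗ 1 + b ⊗ ν` has
involution `σ(a) ⊗ 1 - σ(b) ⊗ ν`. -/
def tauQ (σ : R ≃ₐ[k] R) (p : R × R) : R × R := (σ p.1, -σ p.2)

/-- The set of graded commutators `[x,y] = xy - (-1)^{|x||y|} yx` of homogeneous elements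
of a superalgebra with multiplication `mul` and grading involution `s`
(an element `x` is homogeneous of parity `p` iff `s x = (-1)^p • x`). -/
def gcSet (A : Type) [AddCommGroup A] (mul : A → A → A) (s : A → A) : Set A :=
  {z | ∃ x y : A, ∃ px py : ZMod 2,
    s x = ((-1 : ℤ) ^ px.val) • x ∧ s y = ((-1 : ℤ) ^ py.val) • y ∧
    z = mul x y - ((-1 : ℤ) ^ (px * py).val) • mul y x}

lemma zmod2_em (p : ZMod 2) : p = 0 ∨ p = 1 := by revert p; decide

lemma sgn0 : ((-1 : ℤ) ^ (0 : ZMod 2).val) = 1 := by decide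
lemma sgn1 : ((-1 : ℤ) ^ (1 : ZMod 2).val) = -1 := by decide

omit [Invertible (2:k)] in
lemma gc00 (σ : R ≃ₐ[k] R) {a b : R} (ha : σ a = a) (hb : σ b = b) :
    a * b - b * a ∈ gcSet R (· * ·) ⇑σ :=
  ⟨a, b, 0, 0, by rw [sgn0, one_smul]; exact ha, by rw [sgn0, one_smul]; exact hb,
    by norm_num [sgn0]⟩

omit [Invertible (2:k)] in
lemma gc01 (σ : R ≃ₐ[k] R) {a b : R} (ha : σ a = a) (hb : σ b = -b) :
    a * b - b * a ∈ gcSet R (· * ·) ⇑σ :=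
  ⟨a, b, 0, 1, by rw [sgn0, one_smul]; exact ha, by rw [sgn1, neg_one_zsmul]; exact hb,
    by norm_num [sgn0]⟩

omit [Invertible (2:k)] in
lemma gc10 (σ : R ≃ₐ[k] R) {a b : R} (ha : σ a = -a) (hb : σ b = b) :
    a * b - b * a ∈ gcSet R (· * ·) ⇑σ :=
  ⟨a, b, 1, 0, by rw [sgn1, neg_one_zsmul]; exact ha, by rw [sgn0, one_smul]; exact hb,
    by norm_num [sgn0]⟩

omit [Invertible (2:k)] in
lemma gc11 (σ : R ≃ₐ[k] R) {a b : R} (ha : σ a = -a) (hb : σ b = -b) :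
    a * b + b * a ∈ gcSet R (· * ·) ⇑σ :=
  ⟨a, b, 1, 1, by rw [sgn1, neg_one_zsmul]; exact ha, by rw [sgn1, neg_one_zsmul]; exact hb,
    by norm_num [sgn1, sub_neg_eq_add]⟩

-- `(b+b, 0)` is a graded commutator in `R ⊗ Q1` when `b` is homogeneous.
omit [Invertible (2:k)] in
lemma key1 (σ : R ≃ₐ[k] R) (b : R) (hb : σ b = b ∨ σ b = -b) :
    ((b + b, 0) : R × R) ∈ gcSet (R × R) (mulQ σ) (tauQ σ) := by
  rcases hb with hb | hb
  · refine ⟨(0, b), (0, 1), 1, 1, ?_, ?_, ?_⟩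
    · simp [tauQ, hb, Prod.ext_iff, sgn1]
    · simp [tauQ, Prod.ext_iff, sgn1]
    · simp only [mulQ, one_mul, mul_one, mul_zero, zero_mul, map_one, map_zero, hb,
        show ((1:ZMod 2)*1) = 1 from rfl, sgn1, neg_one_zsmul, Prod.ext_iff]
      constructor <;> simp
  · refine ⟨(0, b), (0, 1), 0, 1, ?_, ?_, ?_⟩
    · simp [tauQ, hb, Prod.ext_iff, sgn0]
    · simp [tauQ, Prod.ext_iff, sgn1]
    · simp only [mulQ, one_mul, mul_one, mul_zero, zero_mul, map_one, map_zero, hb,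
        show ((0:ZMod 2)*1) = 0 from rfl, sgn0, one_smul, Prod.ext_iff]
      constructor <;> simp

-- `(0, c)` is a graded commutator in `R ⊗ Q1` for each graded commutator `c` of `R`.
omit [Invertible (2:k)] in
lemma key2 (σ : R ≃ₐ[k] R) {c : R} (hc : c ∈ gcSet R (· * ·) ⇑σ) :
    ((0, c) : R × R) ∈ gcSet (R × R) (mulQ σ) (tauQ σ) := by
  obtain ⟨a, b, pa, pb, ha, hb, rfl⟩ := hc
  rcases zmod2_em pa with rfl | rfl <;> rcases zmod2_em pb with rfl | rfl <;>
    simp only [sgn0, sgn1, one_smul, neg_one_zsmul] at ha hb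
  · refine ⟨(a, 0), (0, b), 0, 1, ?_, ?_, ?_⟩
    · simp [tauQ, ha, Prod.ext_iff, sgn0]
    · simp [tauQ, hb, Prod.ext_iff, sgn1]
    · simp [mulQ, ha, Prod.ext_iff, show ((0:ZMod 2)*1) = 0 from rfl,
        show ((0:ZMod 2)*0) = 0 from rfl, sgn0]
  · refine ⟨(a, 0), (0, b), 0, 0, ?_, ?_, ?_⟩
    · simp [tauQ, ha, Prod.ext_iff, sgn0]
    · simp [tauQ, hb, Prod.ext_iff, sgn0]
    · simp [mulQ, ha, Prod.ext_iff, show ((0:ZMod 2)*1) = 0 from rfl,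
        show ((0:ZMod 2)*0) = 0 from rfl, sgn0]
  · refine ⟨(a, 0), (0, b), 1, 1, ?_, ?_, ?_⟩
    · simp [tauQ, ha, Prod.ext_iff, sgn1]
    · simp [tauQ, hb, Prod.ext_iff, sgn1]
    · simp [mulQ, ha, Prod.ext_iff, show ((1:ZMod 2)*1) = 1 from rfl,
        show ((1:ZMod 2)*0) = 0 from rfl, sgn0, sgn1, mul_neg, sub_neg_eq_add]
  · refine ⟨(a, 0), (0, b), 1, 0, ?_, ?_, ?_⟩
    · simp [tauQ, ha, Prod.ext_iff, sgn1]
    · simp [tauQ, hb, Prod.ext_iff, sgn0]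
    · simp [mulQ, ha, Prod.ext_iff, show ((1:ZMod 2)*1) = 1 from rfl,
        show ((1:ZMod 2)*0) = 0 from rfl, sgn0, sgn1, mul_neg, sub_neg_eq_add]

/-- For a unital associative superalgebra `R` over `k` (2 invertible), the span of
graded commutators `[R⊗Q1, R⊗Q1]` equals `(R ⊗ 1) ⊕ ([R,R] ⊗ ν)`, where `[R,R]` is the span
of graded commutators of `R`.  Here `R ⊗ Q1` is modelled on `R × R` via
`(a,b) ↔ a ⊗ 1 + b ⊗ ν`, so the right-hand side is `⊤ × span [R,R]`. -/
theorem span_comm_RQ1 (σ : R ≃ₐ[k] R) (hσ : ∀ a, σ (σ a) = a) :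
    Submodule.span k (gcSet (R × R) (mulQ σ) (tauQ σ)) =
      (⊤ : Submodule k R).prod (Submodule.span k (gcSet R (· * ·) ⇑σ)) := by
  apply le_antisymm
  · rw [Submodule.span_le]
    rintro z ⟨⟨a, b⟩, ⟨c, d⟩, px, py, hx, hy, rfl⟩
    simp only [tauQ, Prod.ext_iff, Prod.smul_fst, Prod.smul_snd] at hx hy
    obtain ⟨ha, hb⟩ := hx
    obtain ⟨hc, hd⟩ := hy
    refine Submodule.mem_prod.mpr ⟨trivial, ?_⟩
    simp only [mulQ, Prod.snd_sub, Prod.smul_snd]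
    rcases zmod2_em px with rfl | rfl <;> rcases zmod2_em py with rfl | rfl <;>
      simp only [mul_zero, zero_mul, mul_one, sgn0, sgn1, one_smul, neg_one_zsmul]
        at ha hb hc hd ⊢
    · -- σa=a, σb=-b, σc=c, σd=-d
      replace hb : σ b = -b := neg_eq_iff_eq_neg.mp hb
      replace hd : σ d = -d := neg_eq_iff_eq_neg.mp hd
      rw [hc, ha]
      have e : a*d + b*c - (c*b + d*a) = (a*d - d*a) + (b*c - c*b) := by abel
      rw [e]
      exact add_mem (Submodule.subset_span (gc01 σ ha hd))
        (Submodule.subset_span (gc10 σ hb hc))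
    · -- σa=a, σb=-b, σc=-c, σd=d
      replace hb : σ b = -b := neg_eq_iff_eq_neg.mp hb
      replace hd : σ d = d := neg_inj.mp hd
      rw [hc, ha]
      have e : a*d + b*(-c) - (c*b + d*a) = (a*d - d*a) - (b*c + c*b) := by
        rw [mul_neg]; abel
      rw [e]
      exact sub_mem (Submodule.subset_span (gc00 σ ha hd))
        (Submodule.subset_span (gc11 σ hb hc))
    · -- σa=-a, σb=b, σc=c, σd=-d
      replace hb : σ b = b := neg_inj.mp hb
      replace hd : σ d = -d := neg_eq_iff_eq_neg.mp hd
      rw [hc, ha]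
      have e : a*d + b*c - (c*b + d*(-a)) = (a*d + d*a) + (b*c - c*b) := by
        rw [mul_neg]; abel
      rw [e]
      exact add_mem (Submodule.subset_span (gc11 σ ha hd))
        (Submodule.subset_span (gc00 σ hb hc))
    · -- σa=-a, σb=b, σc=-c, σd=d, sign -1
      replace hb : σ b = b := neg_inj.mp hb
      replace hd : σ d = d := neg_inj.mp hd
      rw [hc, ha]
      have e : a*d + b*(-c) - -(c*b + d*(-a)) = (a*d - d*a) - (b*c - c*b) := by
        rw [mul_neg, mul_neg]; abel
      rw [e]
      exact sub_mem (Submodule.subset_span (gc10 σ ha hd))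
        (Submodule.subset_span (gc01 σ hb hc))
  · intro p hp
    obtain ⟨-, hs⟩ := Submodule.mem_prod.mp hp
    set S := Submodule.span k (gcSet (R × R) (mulQ σ) (tauQ σ)) with hS
    have hA : ∀ r : R, ((r, 0) : R × R) ∈ S := by
      intro r
      have h1 : ((r + σ r) + (r + σ r), (0:R)) ∈ S :=
        Submodule.subset_span (key1 σ _ (Or.inl (by rw [map_add, hσ, add_comm])))
      have h2 : ((r - σ r) + (r - σ r), (0:R)) ∈ S :=
        Submodule.subset_span (key1 σ _ (Or.inr (by simp [map_sub, hσ])))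
      have e : ((r, 0) : R × R) =
          (⅟(2:k)) • ((⅟(2:k)) • ((((r + σ r) + (r + σ r), (0:R)) : R × R) +
            ((r - σ r) + (r - σ r), (0:R)))) := by
        have e2 : ((((r + σ r) + (r + σ r), (0:R)) : R × R) +
            ((r - σ r) + (r - σ r), (0:R))) = (2:k) • ((2:k) • ((r, 0) : R × R)) := by
          ext
          · simp [two_smul]; abel
          · simp
        rw [e2, invOf_smul_smul, invOf_smul_smul]
      rw [e]
      exact Submodule.smul_mem _ _ (Submodule.smul_mem _ _ (add_mem h1 h2))
    have hB : ((0, p.2) : R × R) ∈ S := by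
      have hle : Submodule.span k (gcSet R (· * ·) ⇑σ) ≤
          Submodule.comap (LinearMap.inr k R R) S := by
        rw [Submodule.span_le]
        intro c hc
        exact Submodule.subset_span (key2 σ hc)
      exact hle hs
    have hsplit : p = (p.1, 0) + (0, p.2) := by ext <;> simp
    rw [hsplit]
    exact add_mem (hA p.1) hB
end

section
/- Let R be a unital associative superalgebra over a commutative ring k with 2 invertible. The k-linear map sending u_{ij}(a) ↦ e_{ij}(a⊗1) and w_{ij}(a) ↦ e_{ij}(a⊗ν) is an isomorphism of Lie superalgebras q_n(R) ≅ gl_n(R⊗Q1). -/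
variable {k : Type} [CommRing k] [Invertible (2 : k)]
variable {R : Type} [Ring R] [Algebra k R]

/-- The grading involution of `R ⊗ Q1` as a `k`-linear map. -/
def tauL (σ : R ≃ₐ[k] R) : (R × R) →ₗ[k] (R × R) :=
  LinearMap.prod (σ.toLinearMap ∘ₗ LinearMap.fst k R R)
    (-(σ.toLinearMap ∘ₗ LinearMap.snd k R R))

/-- The queer Lie superalgebra `q_n(A)` coordinatized by a superalgebra `A` with grading
involution `s`: block matrices `[[A,B],[ρ(B),ρ(A)]]` inside `gl_{n|n}(A)`, where `ρ = s`
entrywise (so `ρ(a) = (-1)^{|a|} a` on homogeneous elements). -/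
def qSub (n : ℕ) (A : Type) [AddCommGroup A] [Module k A] (s : A →ₗ[k] A) :
    Submodule k (Matrix (Fin n ⊕ Fin n) (Fin n ⊕ Fin n) A) where
  carrier := {M | (∀ i j, M (Sum.inr i) (Sum.inr j) = s (M (Sum.inl i) (Sum.inl j))) ∧
                  (∀ i j, M (Sum.inr i) (Sum.inl j) = s (M (Sum.inl i) (Sum.inr j)))}
  add_mem' := by
    intro M N hM hN
    exact ⟨fun i j => by simp [Matrix.add_apply, hM.1 i j, hN.1 i j],
           fun i j => by simp [Matrix.add_apply, hM.2 i j, hN.2 i j]⟩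
  zero_mem' := ⟨fun i j => by simp, fun i j => by simp⟩
  smul_mem' := by
    intro c M hM
    exact ⟨fun i j => by simp [Matrix.smul_apply, hM.1 i j],
           fun i j => by simp [Matrix.smul_apply, hM.2 i j]⟩

/-- The grading involution of `gl_{n|n}(A)`: the parity of `e_{ij}(a)` is `|i| + |j| + |a|`,
so the involution applies `s` entrywise with a sign `-1` on the off-diagonal blocks. -/
def gInvMat {n : ℕ} {A : Type} [Neg A] (s : A → A)
    (M : Matrix (Fin n ⊕ Fin n) (Fin n ⊕ Fin n) A) :
    Matrix (Fin n ⊕ Fin n) (Fin n ⊕ Fin n) A :=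
  Matrix.of fun i j => if i.isLeft = j.isLeft then s (M i j) else -(s (M i j))

/-- The set of graded commutators `[x,y] = xy - (-1)^{|x||y|} yx` of homogeneous elements of
a submodule `V` of `gl_{n|n}(A)` (homogeneity w.r.t. the grading involution `gInvMat s`). -/
def gBrSet (n : ℕ) {A : Type} [Ring A] [Module k A]
    (s : A → A) (V : Submodule k (Matrix (Fin n ⊕ Fin n) (Fin n ⊕ Fin n) A)) :
    Set (Matrix (Fin n ⊕ Fin n) (Fin n ⊕ Fin n) A) :=
  {z | ∃ x ∈ V, ∃ y ∈ V, ∃ px py : ZMod 2,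
    gInvMat s x = ((-1 : ℤ) ^ px.val) • x ∧ gInvMat s y = ((-1 : ℤ) ^ py.val) • y ∧
    z = x * y - ((-1 : ℤ) ^ (px * py).val) • (y * x)}

/-- The derived sub-superalgebra `[V, V]`: the span of graded commutators of homogeneous
elements of `V`. -/
def derivedSub (n : ℕ) {A : Type} [Ring A] [Module k A]
    (s : A → A) (V : Submodule k (Matrix (Fin n ⊕ Fin n) (Fin n ⊕ Fin n) A)) :
    Submodule k (Matrix (Fin n ⊕ Fin n) (Fin n ⊕ Fin n) A) :=
  Submodule.span k (gBrSet n s V)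

/-- Matrix multiplication over the superalgebra `R ⊗ Q1` (modelled on `R × R` with
multiplication `mulQ σ`). -/
def mmulQ (σ : R ≃ₐ[k] R) {m : Type} [Fintype m] (M N : Matrix m m (R × R)) :
    Matrix m m (R × R) :=
  Matrix.of fun i j => ∑ l, mulQ σ (M i l) (N l j)

/-- The grading involution of `gl_n(R ⊗ Q1)`: entrywise application of the involution of
`R ⊗ Q1` (the parity of `e_{ij}(s)` is `|s|`). -/
def tauMat (σ : R ≃ₐ[k] R) {m : Type} (M : Matrix m m (R × R)) : Matrix m m (R × R) :=
  Matrix.of fun i j => tauQ σ (M i j)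

/-! A matrix `[[A, B], [σB, σA]]` of `q_n(R)` is determined by its top row of blocks `(A, B)`,
which is read as the matrix `A + Bν` over `R ⊗ Q1`. Multiplying by `[[C, D], [σD, σC]]` gives
the top row `(AC + B·σD, AD + B·σC)`, which is `(A + Bν)(C + Dν)` computed with
`νc = σ(c)ν` and `ν² = 1`. The grading matches as well, since `gl_{n|n}` gives the off-diagonal
blocks the sign of `ν`. -/

open Matrix

section TopBlocks

variable {S A : Type} [Semiring S] [AddCommMonoid A] [Module S A] {n : ℕ}

def pairTopBlocks :
    Matrix (Fin n ⊕ Fin n) (Fin n ⊕ Fin n) A →ₗ[S] Matrix (Fin n) (Fin n) (A × A) where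
  toFun M := of fun i j => (M (Sum.inl i) (Sum.inl j), M (Sum.inl i) (Sum.inr j))
  map_add' _ _ := rfl
  map_smul' _ _ := rfl

@[simp]
theorem pairTopBlocks_apply (M : Matrix (Fin n ⊕ Fin n) (Fin n ⊕ Fin n) A) (i j : Fin n) :
    pairTopBlocks (S := S) M i j = (M (Sum.inl i) (Sum.inl j), M (Sum.inl i) (Sum.inr j)) :=
  rfl

end TopBlocks

section QueerMatrices

omit [Invertible (2 : k)]

variable {A : Type} [AddCommGroup A] [Module k A] {n : ℕ}

def qSubEquiv (s : A →ₗ[k] A) : qSub n A s ≃ₗ[k] Matrix (Fin n) (Fin n) (A × A) where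
  toLinearMap := pairTopBlocks ∘ₗ (qSub n A s).subtype
  invFun N := ⟨fromBlocks (N.map Prod.fst) (N.map Prod.snd) (N.map (s ∘ Prod.snd))
      (N.map (s ∘ Prod.fst)), fun _ _ => rfl, fun _ _ => rfl⟩
  left_inv := by
    rintro ⟨M, hM₂₂, hM₂₁⟩
    ext (i | i) (j | j) <;> simp [hM₂₂, hM₂₁]
  right_inv _ := rfl

theorem qSubEquiv_apply (s : A →ₗ[k] A) (M : qSub n A s) :
    qSubEquiv s M = pairTopBlocks (S := k) (M : Matrix (Fin n ⊕ Fin n) (Fin n ⊕ Fin n) A) :=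
  rfl

end QueerMatrices

section TensorQ1

omit [Invertible (2 : k)]

variable {n : ℕ} (σ : R ≃ₐ[k] R)

theorem tauMat_pairTopBlocks_of_gInvMat_eq_zsmul
    {M : Matrix (Fin n ⊕ Fin n) (Fin n ⊕ Fin n) R} {ε : ℤ} (hM : gInvMat σ M = ε • M) :
    tauMat σ (pairTopBlocks (S := k) M) = ε • pairTopBlocks (S := k) M := by
  ext i j
  · simpa [gInvMat, tauMat, tauQ] using congrFun (congrFun hM (Sum.inl i)) (Sum.inl j)
  · simpa [gInvMat, tauMat, tauQ] using congrFun (congrFun hM (Sum.inl i)) (Sum.inr j)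

theorem pairTopBlocks_mul {X Y : Matrix (Fin n ⊕ Fin n) (Fin n ⊕ Fin n) R}
    (hY : Y ∈ qSub n R σ.toLinearMap) :
    pairTopBlocks (S := k) (X * Y)
      = mmulQ σ (pairTopBlocks (S := k) X) (pairTopBlocks (S := k) Y) := by
  ext i j
  · simp [mul_apply, Fintype.sum_sum_type, mmulQ, mulQ, hY.2, Prod.fst_sum, Finset.sum_add_distrib]
  · simp [mul_apply, Fintype.sum_sum_type, mmulQ, mulQ, hY.1, Prod.snd_sum, Finset.sum_add_distrib]

theorem pairTopBlocks_mul_sub_zsmul_mul {X Y : Matrix (Fin n ⊕ Fin n) (Fin n ⊕ Fin n) R}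
    (hX : X ∈ qSub n R σ.toLinearMap) (hY : Y ∈ qSub n R σ.toLinearMap) (ε : ℤ) :
    pairTopBlocks (S := k) (X * Y - ε • (Y * X))
      = mmulQ σ (pairTopBlocks (S := k) X) (pairTopBlocks (S := k) Y)
        - ε • mmulQ σ (pairTopBlocks (S := k) Y) (pairTopBlocks (S := k) X) := by
  rw [map_sub, map_zsmul, pairTopBlocks_mul σ hY, pairTopBlocks_mul σ hX]

end TensorQ1

open Matrix in
theorem q_iso_gl_RQ1_general (σ : R ≃ₐ[k] R) (n : ℕ) :
    ∃ Φ : ↥(qSub n R σ.toLinearMap) ≃ₗ[k] Matrix (Fin n) (Fin n) (R × R),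
      (∀ (M : ↥(qSub n R σ.toLinearMap)) (i j : Fin n),
        Φ M i j = ((M : Matrix (Fin n ⊕ Fin n) (Fin n ⊕ Fin n) R) (Sum.inl i) (Sum.inl j),
                   (M : Matrix (Fin n ⊕ Fin n) (Fin n ⊕ Fin n) R) (Sum.inl i) (Sum.inr j))) ∧
      (∀ (M : ↥(qSub n R σ.toLinearMap)) (pM : ZMod 2),
        gInvMat ⇑σ (M : Matrix (Fin n ⊕ Fin n) (Fin n ⊕ Fin n) R) = ((-1 : ℤ) ^ pM.val) • (M : Matrix (Fin n ⊕ Fin n) (Fin n ⊕ Fin n) R) →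
        tauMat σ (Φ M) = ((-1 : ℤ) ^ pM.val) • Φ M) ∧
      (∀ (M N P : ↥(qSub n R σ.toLinearMap)) (pM pN : ZMod 2),
        gInvMat ⇑σ (M : Matrix (Fin n ⊕ Fin n) (Fin n ⊕ Fin n) R) = ((-1 : ℤ) ^ pM.val) • (M : Matrix (Fin n ⊕ Fin n) (Fin n ⊕ Fin n) R) →
        gInvMat ⇑σ (N : Matrix (Fin n ⊕ Fin n) (Fin n ⊕ Fin n) R) = ((-1 : ℤ) ^ pN.val) • (N : Matrix (Fin n ⊕ Fin n) (Fin n ⊕ Fin n) R) →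
        (P : Matrix (Fin n ⊕ Fin n) (Fin n ⊕ Fin n) R)
            = (M : Matrix (Fin n ⊕ Fin n) (Fin n ⊕ Fin n) R) * (N : Matrix (Fin n ⊕ Fin n) (Fin n ⊕ Fin n) R)
            - ((-1 : ℤ) ^ (pM * pN).val) •
                ((N : Matrix (Fin n ⊕ Fin n) (Fin n ⊕ Fin n) R) * (M : Matrix (Fin n ⊕ Fin n) (Fin n ⊕ Fin n) R)) →
        Φ P = mmulQ σ (Φ M) (Φ N)
            - ((-1 : ℤ) ^ (pM * pN).val) • mmulQ σ (Φ N) (Φ M)) := by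
  refine ⟨qSubEquiv σ.toLinearMap, fun _ _ _ => rfl, fun _ _ hM => ?_,
    fun M N P _ _ _ _ hP => ?_⟩
  · exact tauMat_pairTopBlocks_of_gInvMat_eq_zsmul σ hM
  · rw [qSubEquiv_apply, hP, pairTopBlocks_mul_sub_zsmul_mul σ M.2 N.2]
    rfl

open Matrix in
/-- The `k`-linear map `u_{ij}(a) ↦ e_{ij}(a ⊗ 1)`, `w_{ij}(a) ↦ e_{ij}(a ⊗ ν)`
is an isomorphism of Lie superalgebras `q_n(R) ≅ gl_n(R ⊗ Q1)`.  Concretely: there is a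
`k`-linear equivalence `Φ` from `q_n(R)` (the block matrices `[[A,B],[ρB,ρA]]`) onto
`n × n`-matrices over `R ⊗ Q1 ≃ R × R`, given entrywise by `(Φ M) i j = (A i j, B i j)`
(which sends `u_{ij}(a)` to `e_{ij}(a⊗1)` and `w_{ij}(a)` to `e_{ij}(a⊗ν)`), preserving the
grading and the graded commutators of homogeneous elements. -/
theorem q_iso_gl_RQ1 (σ : R ≃ₐ[k] R) (hσ : ∀ a, σ (σ a) = a) (n : ℕ) :
    ∃ Φ : ↥(qSub n R σ.toLinearMap) ≃ₗ[k] Matrix (Fin n) (Fin n) (R × R),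
      (∀ (M : ↥(qSub n R σ.toLinearMap)) (i j : Fin n),
        Φ M i j = ((M : Matrix (Fin n ⊕ Fin n) (Fin n ⊕ Fin n) R) (Sum.inl i) (Sum.inl j),
                   (M : Matrix (Fin n ⊕ Fin n) (Fin n ⊕ Fin n) R) (Sum.inl i) (Sum.inr j))) ∧
      (∀ (M : ↥(qSub n R σ.toLinearMap)) (pM : ZMod 2),
        gInvMat ⇑σ (M : Matrix (Fin n ⊕ Fin n) (Fin n ⊕ Fin n) R) = ((-1 : ℤ) ^ pM.val) • (M : Matrix (Fin n ⊕ Fin n) (Fin n ⊕ Fin n) R) →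
        tauMat σ (Φ M) = ((-1 : ℤ) ^ pM.val) • Φ M) ∧
      (∀ (M N P : ↥(qSub n R σ.toLinearMap)) (pM pN : ZMod 2),
        gInvMat ⇑σ (M : Matrix (Fin n ⊕ Fin n) (Fin n ⊕ Fin n) R) = ((-1 : ℤ) ^ pM.val) • (M : Matrix (Fin n ⊕ Fin n) (Fin n ⊕ Fin n) R) →
        gInvMat ⇑σ (N : Matrix (Fin n ⊕ Fin n) (Fin n ⊕ Fin n) R) = ((-1 : ℤ) ^ pN.val) • (N : Matrix (Fin n ⊕ Fin n) (Fin n ⊕ Fin n) R) →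
        (P : Matrix (Fin n ⊕ Fin n) (Fin n ⊕ Fin n) R)
            = (M : Matrix (Fin n ⊕ Fin n) (Fin n ⊕ Fin n) R) * (N : Matrix (Fin n ⊕ Fin n) (Fin n ⊕ Fin n) R)
            - ((-1 : ℤ) ^ (pM * pN).val) •
                ((N : Matrix (Fin n ⊕ Fin n) (Fin n ⊕ Fin n) R) * (M : Matrix (Fin n ⊕ Fin n) (Fin n ⊕ Fin n) R)) →
        Φ P = mmulQ σ (Φ M) (Φ N)
            - ((-1 : ℤ) ^ (pM * pN).val) • mmulQ σ (Φ N) (Φ M)) :=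
  q_iso_gl_RQ1_general σ n
end

section
/- Let R be a unital associative superalgebra over a ring k with 2 invertible, and n ≥ 2. Then the special queer Lie superalgebra sq_n(R) := [q_n(R), q_n(R)] is a perfect Lie superalgebra, i.e., [sq_n(R), sq_n(R)] = sq_n(R). -/
variable {k : Type} [CommRing k] [Invertible (2 : k)]
variable {R : Type} [Ring R] [Algebra k R]

/-! Write `E_ij^t(a)` for the element of `q_n(R)` with entry `a` in the upper block row, at
column `j` of the even (`t = 0`) or odd (`t = 1`) block. Every homogeneous element of `q_n(R)` is a
sum of such elements with homogeneous `a`, and the bracket is bilinear, so it suffices to place the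
brackets of two of them in `[sq_n(R), sq_n(R)]`.

For `i ≠ l`, `x = E_il^t(a)` lies in `sq_n(R)` as `[x, E_ll]`, and in `[sq_n(R), sq_n(R)]` as
`½ [x, E_ll - E_ii]`, since `E_ll - E_ii = [E_li, E_il]` lies in `sq_n(R)`. A bracket of two
elements `E_ij^t(a)` is zero, a multiple of an off-diagonal one, or a bracket of two off-diagonal
ones, except when both sit at the same diagonal position `(l, l)`: then it differs from
`[E_lm(a), E_ml(b)]` by a multiple of `[E_ml(c), E_lm(1)]` for any `m ≠ l`, which exists as
`n ≥ 2`.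

The other inclusion holds because `q_n(R)` is closed under multiplication. -/

open Matrix Sum

def HasParity {M : Type*} [AddCommGroup M] (f : M → M) (p : ZMod 2) (x : M) : Prop :=
  f x = ((-1 : ℤ) ^ p.val) • x

theorem neg_one_pow_zmod_two_val_add (p q : ZMod 2) :
    (-1 : ℤ) ^ (p + q).val = (-1) ^ p.val * (-1) ^ q.val := by
  revert p q; decide

theorem Finset.sum_mul_sub_zsmul_sum_mul {A ι κ : Type} [Ring A] (s : Finset ι) (t : Finset κ)
    (f : ι → A) (g : κ → A) (c : ℤ) :
    (∑ i ∈ s, f i) * (∑ j ∈ t, g j) - c • ((∑ j ∈ t, g j) * (∑ i ∈ s, f i)) =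
      ∑ i ∈ s, ∑ j ∈ t, (f i * g j - c • (g j * f i)) := by
  rw [Finset.sum_mul_sum, Finset.sum_mul_sum, Finset.sum_comm (s := t), Finset.smul_sum]
  simp only [Finset.smul_sum, ← Finset.sum_sub_distrib]

section Derived

variable {S A : Type} [CommRing S] [Ring A] [Module S A] {n : ℕ} {s : A → A}
  {V W : Submodule S (Matrix (Fin n ⊕ Fin n) (Fin n ⊕ Fin n) A)}

theorem bracket_mem_derivedSub {x y : Matrix (Fin n ⊕ Fin n) (Fin n ⊕ Fin n) A} {p q : ZMod 2}
    (hx : x ∈ V) (hy : y ∈ V) (hpx : HasParity (gInvMat s) p x)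
    (hqy : HasParity (gInvMat s) q y) :
    x * y - ((-1 : ℤ) ^ (p * q).val) • (y * x) ∈ derivedSub n s V :=
  Submodule.subset_span ⟨x, hx, y, hy, p, q, hpx, hqy, rfl⟩

theorem derivedSub_mono (h : V ≤ W) : derivedSub n s V ≤ derivedSub n s W :=
  Submodule.span_mono fun _ ⟨x, hx, y, hy, p, q, hpx, hqy, hz⟩ =>
    ⟨x, h hx, y, h hy, p, q, hpx, hqy, hz⟩

theorem derivedSub_le_of_mul_mem (hV : ∀ x ∈ V, ∀ y ∈ V, x * y ∈ V) :
    derivedSub n s V ≤ V :=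
  Submodule.span_le.mpr fun _ ⟨x, hx, y, hy, _, _, _, _, hz⟩ =>
    hz ▸ sub_mem (hV x hx y hy) (zsmul_mem (hV y hy x hx) _)

end Derived

section Parity

variable {K A : Type} [CommRing K] [Ring A] [Algebra K A] {σ : A ≃ₐ[K] A}

variable (σ) in
theorem hasParity_one : HasParity σ 0 (1 : A) := by
  simp [HasParity]

theorem HasParity.mul {p q : ZMod 2} {a b : A} (ha : HasParity σ p a) (hb : HasParity σ q b) :
    HasParity σ (p + q) (a * b) := by
  rw [HasParity, map_mul, ha, hb, smul_mul_smul_comm, neg_one_pow_zmod_two_val_add]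

theorem HasParity.map {p : ZMod 2} {a : A} (ha : HasParity σ p a) : HasParity σ p (σ a) :=
  (congrArg σ ha).trans (map_zsmul σ _ a)

theorem hasParity_mul_cond {p q : ZMod 2} {t t' : Bool} {a b : A}
    (ha : HasParity σ (p + t.toNat) a) (hb : HasParity σ (q + t'.toNat) b) :
    HasParity σ (p + q + (xor t t').toNat) (a * bif t then σ b else b) := by
  have hb' : HasParity σ (q + t'.toNat) (bif t then σ b else b) := by
    cases t
    exacts [hb, hb.map]
  have parity_add : ∀ (p q : ZMod 2) (t t' : Bool),
      p + t.toNat + (q + t'.toNat) = p + q + (xor t t').toNat := by decide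
  exact parity_add p q t t' ▸ ha.mul hb'

end Parity

section QSingle

variable {K A : Type} [CommRing K] [Ring A] [Algebra K A] (σ : A ≃ₐ[K] A) {n : ℕ}

def blockIdx (t : Bool) (j : Fin n) : Fin n ⊕ Fin n := bif t then inr j else inl j

def qSingle (i j : Fin n) (t : Bool) (a : A) : Matrix (Fin n ⊕ Fin n) (Fin n ⊕ Fin n) A :=
  single (inl i) (blockIdx t j) a + single (inr i) (blockIdx (!t) j) (σ a)

theorem qSingle_mem (i j : Fin n) (t : Bool) (a : A) :
    qSingle σ i j t a ∈ qSub n A σ.toLinearMap := by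
  constructor <;> intro i' j' <;> cases t <;>
    simp [qSingle, blockIdx, single_apply, and_comm, apply_ite σ]

theorem qSingle_zsmul (i j : Fin n) (t : Bool) (c : ℤ) (a : A) :
    qSingle σ i j t (c • a) = c • qSingle σ i j t a := by
  simp [qSingle, smul_add]

theorem qSingle_mul (hσ : Function.Involutive σ) (i j j' l : Fin n) (t t' : Bool) (a b : A) :
    qSingle σ i j t a * qSingle σ j' l t' b =
      if j = j' then qSingle σ i l (xor t t') (a * bif t then σ b else b) else 0 := by
  split_ifs with h
  · subst h
    cases t <;> cases t' <;> simp [qSingle, blockIdx, add_mul, mul_add, hσ _] <;> abel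
  · cases t <;> cases t' <;> simp [qSingle, blockIdx, add_mul, mul_add, h]

theorem eq_sum_qSingle {x : Matrix (Fin n ⊕ Fin n) (Fin n ⊕ Fin n) A}
    (hx : x ∈ qSub n A σ.toLinearMap) :
    x = ∑ ijt : Fin n × Fin n × Bool,
      qSingle σ ijt.1 ijt.2.1 ijt.2.2 (x (inl ijt.1) (blockIdx ijt.2.2 ijt.2.1)) := by
  obtain ⟨hx₁, hx₂⟩ := hx
  ext (i | i) (j | j) <;>
    simp [Matrix.sum_apply, Fintype.sum_prod_type, qSingle, blockIdx, single_apply, hx₁, hx₂,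
      ite_and]

theorem qSub_mul_mem (hσ : Function.Involutive σ)
    {x y : Matrix (Fin n ⊕ Fin n) (Fin n ⊕ Fin n) A}
    (hx : x ∈ qSub n A σ.toLinearMap) (hy : y ∈ qSub n A σ.toLinearMap) :
    x * y ∈ qSub n A σ.toLinearMap := by
  rw [eq_sum_qSingle σ hx, eq_sum_qSingle σ hy, Finset.sum_mul_sum]
  refine Submodule.sum_mem _ fun _ _ => Submodule.sum_mem _ fun _ _ => ?_
  rw [qSingle_mul σ hσ]
  split_ifs
  exacts [qSingle_mem σ _ _ _ _, zero_mem _]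

theorem gInvMat_sub (M N : Matrix (Fin n ⊕ Fin n) (Fin n ⊕ Fin n) A) :
    gInvMat σ (M - N) = gInvMat σ M - gInvMat σ N := by
  ext i j
  simp only [gInvMat, Matrix.sub_apply, of_apply, map_sub]
  split_ifs <;> abel

theorem gInvMat_qSingle (i j : Fin n) (t : Bool) (a : A) :
    gInvMat σ (qSingle σ i j t a) = ((-1 : ℤ) ^ t.toNat) • qSingle σ i j t (σ a) := by
  ext (i' | i') (j' | j') <;> cases t <;>
    simp [gInvMat, qSingle, blockIdx, single_apply, apply_ite σ, neg_ite]

theorem hasParity_qSingle {p : ZMod 2} {a : A} (i j : Fin n) (t : Bool)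
    (ha : HasParity σ (p + t.toNat) a) : HasParity (gInvMat σ) p (qSingle σ i j t a) := by
  rw [HasParity, gInvMat_qSingle, ha, qSingle_zsmul, smul_smul]
  congr 1
  clear ha; revert p; cases t <;> decide

variable {σ} in
theorem hasParity_qSingle_one (i j : Fin n) :
    HasParity (gInvMat σ) 0 (qSingle σ i j false 1) :=
  hasParity_qSingle σ i j false (by simpa using hasParity_one σ)

variable {σ} in
theorem HasParity.entry {p : ZMod 2} {x : Matrix (Fin n ⊕ Fin n) (Fin n ⊕ Fin n) A}
    (hx : HasParity (gInvMat σ) p x) (i j : Fin n) (t : Bool) :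
    HasParity σ (p + t.toNat) (x (inl i) (blockIdx t j)) := by
  have h := congrFun (congrFun hx (inl i)) (blockIdx t j)
  cases t
  · simpa [gInvMat, blockIdx, HasParity] using h
  · simp only [gInvMat, blockIdx, cond_true, of_apply, isLeft_inl, isLeft_inr,
      Bool.true_eq_false, if_false, Matrix.smul_apply] at h
    rw [HasParity, Bool.toNat_true, Nat.cast_one, neg_one_pow_zmod_two_val_add, ZMod.val_one,
      pow_one, mul_neg_one, neg_smul, blockIdx, cond_true, ← h, neg_neg]

end QSingle

section SQ

variable {K A : Type} [CommRing K] [Ring A] [Algebra K A] {σ : A ≃ₐ[K] A} {n : ℕ}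

abbrev sqSub (σ : A ≃ₐ[K] A) (n : ℕ) :
    Submodule K (Matrix (Fin n ⊕ Fin n) (Fin n ⊕ Fin n) A) :=
  derivedSub n σ (qSub n A σ.toLinearMap)

theorem qSingle_mem_sqSub_of_ne (hσ : Function.Involutive σ) {i l : Fin n} (hil : i ≠ l)
    {t : Bool} {p : ZMod 2} {a : A} (ha : HasParity σ (p + t.toNat) a) :
    qSingle σ i l t a ∈ sqSub σ n := by
  have h := bracket_mem_derivedSub (qSingle_mem σ i l t a) (qSingle_mem σ l l false 1)
    (hasParity_qSingle σ i l t ha) (hasParity_qSingle_one _ _)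
  simpa [qSingle_mul σ hσ, hil.symm] using h

theorem qSingle_sub_qSingle_mem_derivedSub (hσ : Function.Involutive σ)
    {V : Submodule K (Matrix (Fin n ⊕ Fin n) (Fin n ⊕ Fin n) A)} {l m : Fin n} {t : Bool}
    {p : ZMod 2} {c : A} (hc : HasParity σ (p + t.toNat) c) (hlm : qSingle σ l m t c ∈ V)
    (hml : qSingle σ m l false 1 ∈ V) :
    qSingle σ l l t c - qSingle σ m m t c ∈ derivedSub n σ V := by
  have h := bracket_mem_derivedSub hlm hml (hasParity_qSingle σ l m t hc)
    (hasParity_qSingle_one _ _)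
  simpa [qSingle_mul σ hσ] using h

theorem qSingle_mem_derivedSub_sqSub_of_ne [Invertible (2 : K)] (hσ : Function.Involutive σ)
    {i l : Fin n} (hil : i ≠ l) {t : Bool} {p : ZMod 2} {a : A}
    (ha : HasParity σ (p + t.toNat) a) :
    qSingle σ i l t a ∈ derivedSub n σ (sqSub σ n) := by
  set h := qSingle σ l l false 1 - qSingle σ i i false 1
  have hh : h ∈ sqSub σ n :=
    qSingle_sub_qSingle_mem_derivedSub hσ (p := 0) (by simpa using hasParity_one σ)
      (qSingle_mem σ l i false 1) (qSingle_mem σ i l false 1)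
  have hhp : HasParity (gInvMat σ) 0 h := by
    rw [HasParity, gInvMat_sub, hasParity_qSingle_one l l, hasParity_qSingle_one i i, smul_sub]
  have hbr := bracket_mem_derivedSub (qSingle_mem_sqSub_of_ne hσ hil ha) hh
    (hasParity_qSingle σ i l t ha) hhp
  have hbr_eq : qSingle σ i l t a * h - ((-1 : ℤ) ^ (p * 0).val) • (h * qSingle σ i l t a) =
      (2 : K) • qSingle σ i l t a := by
    simp [h, mul_sub, sub_mul, qSingle_mul σ hσ, hil.symm, two_smul]
  rw [hbr_eq] at hbr
  simpa using Submodule.smul_mem _ (⅟2 : K) hbr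

theorem qSingle_bracket_mem_derivedSub_sqSub [Invertible (2 : K)] (hσ : Function.Involutive σ)
    (hn : 2 ≤ n) {i j j' l : Fin n} {t t' : Bool} {p q : ZMod 2} {a b : A}
    (ha : HasParity σ (p + t.toNat) a) (hb : HasParity σ (q + t'.toNat) b) :
    qSingle σ i j t a * qSingle σ j' l t' b -
        ((-1 : ℤ) ^ (p * q).val) • (qSingle σ j' l t' b * qSingle σ i j t a) ∈
      derivedSub n σ (sqSub σ n) := by
  by_cases hj : j = j'
  · subst hj
    by_cases hl : l = i
    · subst hl
      by_cases hlj : l = j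
      · -- `[E_ll(a), E_ll(b)] = [E_lm(a), E_ml(b)] ± [E_ml(c), E_lm(1)]`
        subst hlj
        have : Nontrivial (Fin n) := Fin.nontrivial_iff_two_le.mpr hn
        obtain ⟨m, hml⟩ := exists_ne l
        have h₁ := bracket_mem_derivedSub (qSingle_mem_sqSub_of_ne hσ hml.symm ha)
          (qSingle_mem_sqSub_of_ne hσ hml hb) (hasParity_qSingle σ l m t ha)
          (hasParity_qSingle σ m l t' hb)
        have hc := hasParity_mul_cond hb ha
        have h₂ := qSingle_sub_qSingle_mem_derivedSub hσ hc (qSingle_mem_sqSub_of_ne hσ hml hc)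
          (qSingle_mem_sqSub_of_ne hσ hml.symm (p := 0) (by simpa using hasParity_one σ))
        convert add_mem h₁ (zsmul_mem h₂ ((-1 : ℤ) ^ (p * q).val)) using 1
        simp only [qSingle_mul σ hσ, if_true, Bool.xor_comm t t', smul_sub]
        abel
      · exact bracket_mem_derivedSub (qSingle_mem_sqSub_of_ne hσ hlj ha)
          (qSingle_mem_sqSub_of_ne hσ (Ne.symm hlj) hb) (hasParity_qSingle σ l j t ha)
          (hasParity_qSingle σ j l t' hb)
    · rw [qSingle_mul σ hσ, qSingle_mul σ hσ, if_pos rfl, if_neg hl, smul_zero, sub_zero]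
      exact qSingle_mem_derivedSub_sqSub_of_ne hσ (Ne.symm hl) (hasParity_mul_cond ha hb)
  · rw [qSingle_mul σ hσ, qSingle_mul σ hσ, if_neg hj]
    split_ifs with hl
    · subst hl
      rw [zero_sub]
      exact neg_mem (zsmul_mem
        (qSingle_mem_derivedSub_sqSub_of_ne hσ (Ne.symm hj) (hasParity_mul_cond hb ha)) _)
    · simp

theorem bracket_mem_derivedSub_sqSub [Invertible (2 : K)] (hσ : Function.Involutive σ)
    (hn : 2 ≤ n) {x y : Matrix (Fin n ⊕ Fin n) (Fin n ⊕ Fin n) A} {p q : ZMod 2}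
    (hx : x ∈ qSub n A σ.toLinearMap) (hy : y ∈ qSub n A σ.toLinearMap)
    (hpx : HasParity (gInvMat σ) p x) (hqy : HasParity (gInvMat σ) q y) :
    x * y - ((-1 : ℤ) ^ (p * q).val) • (y * x) ∈ derivedSub n σ (sqSub σ n) := by
  rw [eq_sum_qSingle σ hx, eq_sum_qSingle σ hy, Finset.sum_mul_sub_zsmul_sum_mul]
  exact Submodule.sum_mem _ fun _ _ => Submodule.sum_mem _ fun _ _ =>
    qSingle_bracket_mem_derivedSub_sqSub hσ hn (hpx.entry _ _ _) (hqy.entry _ _ _)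

end SQ

/-- For a unital associative superalgebra `R` over `k` (2 invertible) and `n ≥ 2`,
the special queer Lie superalgebra `sq_n(R) = [q_n(R), q_n(R)]` is perfect:
`[sq_n(R), sq_n(R)] = sq_n(R)`. -/
theorem sq_perfect (σ : R ≃ₐ[k] R) (hσ : ∀ a, σ (σ a) = a) (n : ℕ) (hn : 2 ≤ n) :
    derivedSub n ⇑σ (derivedSub n ⇑σ (qSub n R σ.toLinearMap))
      = derivedSub n ⇑σ (qSub n R σ.toLinearMap) :=
  le_antisymm
    (derivedSub_mono (derivedSub_le_of_mul_mem fun _ hx _ hy => qSub_mul_mem σ hσ hx hy))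
    (Submodule.span_le.mpr fun _ ⟨_, hx, _, hy, _, _, hpx, hqy, hz⟩ =>
      hz ▸ bracket_mem_derivedSub_sqSub hσ hn hx hy hpx hqy)
end

section
/- Suppose k contains a square root i of −1 and 2 is invertible. For any unital associative superalgebra R there is an isomorphism of Lie superalgebras q_n(R⊗Q1) ≅ gl_{n|n}(R), given on generators by u_{ij}(r⊗1) ↦ e_{ij}(r) + (−1)^{|r|} e_{n+i,n+j}(r), u_{ij}(r⊗ν) ↦ e_{i,n+j}(r) + (−1)^{|r|} e_{n+i,j}(r), w_{ij}(r⊗1) ↦ i(−e_{i,n+j}(r) + (−1)^{|r|} e_{n+i,j}(r)), w_{ij}(r⊗ν) ↦ i(e_{ij}(r) − (−1)^{|r|} e_{n+i,n+j}(r)). -/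
variable {k : Type} [CommRing k] [Invertible (2 : k)]
variable {R : Type} [Ring R] [Algebra k R]

/-- `u_{ij}(s)` for `q_n(S)` over a superalgebra `S` with grading involution `t`. -/
def uMat (n : ℕ) {A : Type} [AddCommMonoid A] (t : A → A) (i j : Fin n) (a : A) :
    Matrix (Fin n ⊕ Fin n) (Fin n ⊕ Fin n) A :=
  Matrix.single (Sum.inl i) (Sum.inl j) a +
    Matrix.single (Sum.inr i) (Sum.inr j) (t a)

/-- `w_{ij}(s)` for `q_n(S)` over a superalgebra `S` with grading involution `t`. -/
def wMat (n : ℕ) {A : Type} [AddCommMonoid A] (t : A → A) (i j : Fin n) (a : A) :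
    Matrix (Fin n ⊕ Fin n) (Fin n ⊕ Fin n) A :=
  Matrix.single (Sum.inl i) (Sum.inr j) a +
    Matrix.single (Sum.inr i) (Sum.inl j) (t a)

/-!
An element of `q_n(R ⊗ Q1)` is determined by its top blocks `A = A₀ + A₁ν` and `B = B₀ + B₁ν`
(`Aₖ, Bₖ ∈ M_n(R)`); it is sent to
`[[A₀ + iB₁, A₁ - iB₀], [σ(A₁ + iB₀), σ(A₀ - iB₁)]]`.
Since `2` and `i` are invertible, the four blocks of the image give back `A₀, A₁, B₀, B₁`.
An entrywise computation using `i² = -1` and `σ² = 1` shows that the map is multiplicative for the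
matrix product over `R ⊗ Q1` whenever the right factor lies in `q_n`, so it preserves graded
commutators of every parity.
-/

section

open Matrix

variable (σ : R ≃ₐ[k] R) (im : k) {n : ℕ}

omit [Invertible (2 : k)] in
lemma tauL_apply (p : R × R) : tauL σ p = tauQ σ p := rfl

def qToGl : Matrix (Fin n ⊕ Fin n) (Fin n ⊕ Fin n) (R × R) →ₗ[k]
    Matrix (Fin n ⊕ Fin n) (Fin n ⊕ Fin n) R where
  toFun M := fromBlocks
    (of fun i j => (M (.inl i) (.inl j)).1 + im • (M (.inl i) (.inr j)).2)
    (of fun i j => (M (.inl i) (.inl j)).2 - im • (M (.inl i) (.inr j)).1)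
    (of fun i j => im • (M (.inr i) (.inl j)).1 - (M (.inr i) (.inr j)).2)
    (of fun i j => (M (.inr i) (.inr j)).1 + im • (M (.inr i) (.inl j)).2)
  map_add' M N := by
    ext (i | i) (j | j) <;>
      simp only [fromBlocks_apply₁₁, fromBlocks_apply₁₂, fromBlocks_apply₂₁, fromBlocks_apply₂₂,
        of_apply, Matrix.add_apply, Prod.fst_add, Prod.snd_add, smul_add] <;> abel
  map_smul' c M := by
    ext (i | i) (j | j) <;>
      simp only [fromBlocks_apply₁₁, fromBlocks_apply₁₂, fromBlocks_apply₂₁, fromBlocks_apply₂₂,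
        of_apply, Matrix.smul_apply, Prod.smul_fst, Prod.smul_snd, smul_add, smul_sub,
        smul_comm c im, RingHom.id_apply]

omit [Invertible (2 : k)] in
lemma qToGl_apply (M : Matrix (Fin n ⊕ Fin n) (Fin n ⊕ Fin n) (R × R)) :
    qToGl im M = fromBlocks
      (of fun i j => (M (.inl i) (.inl j)).1 + im • (M (.inl i) (.inr j)).2)
      (of fun i j => (M (.inl i) (.inl j)).2 - im • (M (.inl i) (.inr j)).1)
      (of fun i j => im • (M (.inr i) (.inl j)).1 - (M (.inr i) (.inr j)).2)
      (of fun i j => (M (.inr i) (.inr j)).1 + im • (M (.inr i) (.inl j)).2) :=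
  rfl

def glToQ (X : Matrix (Fin n ⊕ Fin n) (Fin n ⊕ Fin n) R) :
    Matrix (Fin n ⊕ Fin n) (Fin n ⊕ Fin n) (R × R) :=
  let A : Matrix (Fin n) (Fin n) (R × R) := of fun i j =>
    ⅟(2 : k) • (X (.inl i) (.inl j) + σ (X (.inr i) (.inr j)),
      X (.inl i) (.inr j) + σ (X (.inr i) (.inl j)))
  let B : Matrix (Fin n) (Fin n) (R × R) := of fun i j =>
    (⅟(2 : k) * im) • (X (.inl i) (.inr j) - σ (X (.inr i) (.inl j)),
      σ (X (.inr i) (.inr j)) - X (.inl i) (.inl j))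
  fromBlocks A B (B.map (tauQ σ)) (A.map (tauQ σ))

lemma glToQ_mem (X : Matrix (Fin n ⊕ Fin n) (Fin n ⊕ Fin n) R) :
    glToQ σ im X ∈ qSub n (R × R) (tauL σ) :=
  ⟨fun _ _ => rfl, fun _ _ => rfl⟩

lemma glToQ_qToGl (hσ : ∀ a, σ (σ a) = a) (him : im * im = -1)
    {M : Matrix (Fin n ⊕ Fin n) (Fin n ⊕ Fin n) (R × R)} (hM : M ∈ qSub n (R × R) (tauL σ)) :
    glToQ σ im (qToGl im M) = M := by
  obtain ⟨hdiag, hoff⟩ := hM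
  have htwo : (2 : k) * ⅟2 = 1 := mul_invOf_self 2
  ext (i | i) (j | j) <;>
    simp only [glToQ, qToGl_apply, fromBlocks_apply₁₁, fromBlocks_apply₁₂,
      fromBlocks_apply₂₁, fromBlocks_apply₂₂, of_apply, map_apply, hdiag, hoff, tauL_apply, tauQ,
      map_add, map_sub, map_neg, map_smul, hσ, Prod.smul_mk] <;>
    match_scalars <;> grind

lemma qToGl_glToQ (hσ : ∀ a, σ (σ a) = a) (him : im * im = -1)
    (X : Matrix (Fin n ⊕ Fin n) (Fin n ⊕ Fin n) R) :
    qToGl im (glToQ σ im X) = X := by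
  have htwo : (2 : k) * ⅟2 = 1 := mul_invOf_self 2
  ext (i | i) (j | j) <;>
    simp only [glToQ, qToGl_apply, fromBlocks_apply₁₁, fromBlocks_apply₁₂,
      fromBlocks_apply₂₁, fromBlocks_apply₂₂, of_apply, map_apply, tauQ,
      map_add, map_sub, map_smul, hσ, Prod.smul_mk] <;>
    match_scalars <;> grind

omit [Invertible (2 : k)] in
lemma qToGl_mmulQ (hσ : ∀ a, σ (σ a) = a) (him : im * im = -1)
    (M : Matrix (Fin n ⊕ Fin n) (Fin n ⊕ Fin n) (R × R))
    {N : Matrix (Fin n ⊕ Fin n) (Fin n ⊕ Fin n) (R × R)} (hN : N ∈ qSub n (R × R) (tauL σ)) :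
    qToGl im (mmulQ σ M N) = qToGl im M * qToGl im N := by
  obtain ⟨hdiag, hoff⟩ := hN
  ext (i | i) (j | j) <;>
  · simp only [qToGl_apply, mmulQ, fromBlocks_apply₁₁, fromBlocks_apply₁₂,
      fromBlocks_apply₂₁, fromBlocks_apply₂₂, of_apply, mul_apply,
      Fintype.sum_sum_type, Prod.fst_sum, Prod.snd_sum, Finset.smul_sum,
      ← Finset.sum_add_distrib, ← Finset.sum_sub_distrib]
    refine Finset.sum_congr rfl fun l _ => ?_
    simp only [mulQ, hdiag, hoff, tauL_apply, tauQ, map_neg, hσ,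
      mul_add, add_mul, sub_mul, mul_sub, mul_neg, smul_mul_assoc, mul_smul_comm,
      smul_smul, smul_neg, smul_add, smul_sub, Prod.fst_add, Prod.snd_add]
    match_scalars <;> grind

omit [Invertible (2 : k)] in
lemma qToGl_uMat (i j : Fin n) (a b : R) :
    qToGl im (uMat n (tauQ σ) i j (a, b)) =
      single (.inl i) (.inl j) a + single (.inr i) (.inr j) (σ a) +
        (single (.inl i) (.inr j) b + single (.inr i) (.inl j) (σ b)) := by
  ext (x | x) (y | y) <;>
    simp only [qToGl_apply, uMat, tauQ, fromBlocks_apply₁₁, fromBlocks_apply₁₂,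
      fromBlocks_apply₂₁, fromBlocks_apply₂₂, of_apply, Matrix.add_apply, single_apply,
      Sum.inl.injEq, Sum.inr.injEq, reduceCtorEq, false_and, and_false, if_false] <;>
    split_ifs <;> simp

omit [Invertible (2 : k)] in
lemma qToGl_wMat (i j : Fin n) (a b : R) :
    qToGl im (wMat n (tauQ σ) i j (a, b)) =
      im • (single (.inl i) (.inl j) b - single (.inr i) (.inr j) (σ b) +
        (-single (.inl i) (.inr j) a + single (.inr i) (.inl j) (σ a))) := by
  ext (x | x) (y | y) <;>
    simp only [qToGl_apply, wMat, tauQ, fromBlocks_apply₁₁, fromBlocks_apply₁₂,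
      fromBlocks_apply₂₁, fromBlocks_apply₂₂, of_apply, Matrix.add_apply, Matrix.sub_apply,
      Matrix.neg_apply, Matrix.smul_apply, single_apply, Sum.inl.injEq, Sum.inr.injEq,
      reduceCtorEq, false_and, and_false, if_false] <;>
    split_ifs <;> simp

def qEquivGl (hσ : ∀ a, σ (σ a) = a) (him : im * im = -1) :
    qSub n (R × R) (tauL σ) ≃ₗ[k] Matrix (Fin n ⊕ Fin n) (Fin n ⊕ Fin n) R :=
  { qToGl im ∘ₗ (qSub n (R × R) (tauL σ)).subtype with
    invFun X := ⟨glToQ σ im X, glToQ_mem σ im X⟩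
    left_inv M := Subtype.ext (glToQ_qToGl σ im hσ him M.2)
    right_inv X := qToGl_glToQ σ im hσ him X }

lemma qEquivGl_apply (hσ : ∀ a, σ (σ a) = a) (him : im * im = -1)
    (M : qSub n (R × R) (tauL σ)) :
    qEquivGl σ im hσ him M = qToGl im M := rfl

end

open Matrix in
/-- Suppose `k` contains `i` with `i² = -1` (and 2 invertible).  For any unital
associative superalgebra `R` there is an isomorphism of Lie superalgebras
`q_n(R ⊗ Q1) ≅ gl_{n|n}(R)` given on generators by
`u_{ij}(r⊗1) ↦ e_{ij}(r) + (-1)^{|r|} e_{n+i,n+j}(r)`,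
`u_{ij}(r⊗ν) ↦ e_{i,n+j}(r) + (-1)^{|r|} e_{n+i,j}(r)`,
`w_{ij}(r⊗1) ↦ i(-e_{i,n+j}(r) + (-1)^{|r|} e_{n+i,j}(r))`,
`w_{ij}(r⊗ν) ↦ i(e_{ij}(r) - (-1)^{|r|} e_{n+i,n+j}(r))`,
where `(-1)^{|r|} r` is implemented by `σ r` (its linear extension), and preserving the graded
commutators of homogeneous elements. -/
theorem q_RQ1_iso_gl (σ : R ≃ₐ[k] R) (hσ : ∀ a, σ (σ a) = a)
    (im : k) (him : im * im = -1) (n : ℕ) :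
    ∃ Φ : ↥(qSub n (R × R) (tauL σ)) ≃ₗ[k] Matrix (Fin n ⊕ Fin n) (Fin n ⊕ Fin n) R,
      (∀ (M : ↥(qSub n (R × R) (tauL σ))) (i j : Fin n) (r : R),
        (((M : Matrix (Fin n ⊕ Fin n) (Fin n ⊕ Fin n) (R × R)) = uMat n (tauQ σ) i j ((r, 0) : R × R) →
          Φ M = Matrix.single (Sum.inl i) (Sum.inl j) r
              + Matrix.single (Sum.inr i) (Sum.inr j) (σ r)) ∧
         ((M : Matrix (Fin n ⊕ Fin n) (Fin n ⊕ Fin n) (R × R)) = uMat n (tauQ σ) i j ((0, r) : R × R) →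
          Φ M = Matrix.single (Sum.inl i) (Sum.inr j) r
              + Matrix.single (Sum.inr i) (Sum.inl j) (σ r)) ∧
         ((M : Matrix (Fin n ⊕ Fin n) (Fin n ⊕ Fin n) (R × R)) = wMat n (tauQ σ) i j ((r, 0) : R × R) →
          Φ M = im • (-(Matrix.single (Sum.inl i) (Sum.inr j) r)
              + Matrix.single (Sum.inr i) (Sum.inl j) (σ r))) ∧
         ((M : Matrix (Fin n ⊕ Fin n) (Fin n ⊕ Fin n) (R × R)) = wMat n (tauQ σ) i j ((0, r) : R × R) →
          Φ M = im • (Matrix.single (Sum.inl i) (Sum.inl j) r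
              - Matrix.single (Sum.inr i) (Sum.inr j) (σ r))))) ∧
      (∀ (M N P : ↥(qSub n (R × R) (tauL σ))) (pM pN : ZMod 2),
        gInvMat (tauQ σ) (M : Matrix (Fin n ⊕ Fin n) (Fin n ⊕ Fin n) (R × R))
            = ((-1 : ℤ) ^ pM.val) • (M : Matrix (Fin n ⊕ Fin n) (Fin n ⊕ Fin n) (R × R)) →
        gInvMat (tauQ σ) (N : Matrix (Fin n ⊕ Fin n) (Fin n ⊕ Fin n) (R × R))
            = ((-1 : ℤ) ^ pN.val) • (N : Matrix (Fin n ⊕ Fin n) (Fin n ⊕ Fin n) (R × R)) →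
        (P : Matrix (Fin n ⊕ Fin n) (Fin n ⊕ Fin n) (R × R))
            = mmulQ σ (M : Matrix (Fin n ⊕ Fin n) (Fin n ⊕ Fin n) (R × R)) (N : Matrix (Fin n ⊕ Fin n) (Fin n ⊕ Fin n) (R × R))
            - ((-1 : ℤ) ^ (pM * pN).val) •
                mmulQ σ (N : Matrix (Fin n ⊕ Fin n) (Fin n ⊕ Fin n) (R × R)) (M : Matrix (Fin n ⊕ Fin n) (Fin n ⊕ Fin n) (R × R)) →
        Φ P = Φ M * Φ N - ((-1 : ℤ) ^ (pM * pN).val) • (Φ N * Φ M)) := by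
  refine ⟨qEquivGl σ im hσ him, fun M i j r => ?_, fun M N P pM pN _ _ hP => ?_⟩
  · refine ⟨fun h => ?_, fun h => ?_, fun h => ?_, fun h => ?_⟩ <;>
      simp [qEquivGl_apply, h, qToGl_uMat, qToGl_wMat]
  · rw [qEquivGl_apply, qEquivGl_apply, qEquivGl_apply, hP, map_sub, map_zsmul,
      qToGl_mmulQ σ im hσ him _ N.2, qToGl_mmulQ σ im hσ him _ M.2]
end

section
/- Let R be a unital associative superalgebra over k with 2 invertible. In ⟨R⊗Q1, R⊗Q1⟩, for all even a,b ∈ R: h(a⊗1, b⊗1) = (1/2) h([a,b]⊗ν, 1⊗ν) and h(a⊗ν, b⊗ν) = (1/2) h({a,b}⊗ν, 1⊗ν), where [a,b] = ab − ba and {a,b} = ab + ba. -/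
open TensorProduct

variable {k : Type} [CommRing k] [Invertible (2 : k)]
variable {R : Type} [Ring R] [Algebra k R]

/-- The submodule `I_A ⊆ A ⊗ A` of relations for the first cyclic homology of a superalgebra
`A` (multiplication `mul`, grading involution `s`): it is spanned by the graded symmetry
relations `x ⊗ y + (-1)^{|x||y|} y ⊗ x` and the graded cyclic relations
`(-1)^{|x||z|} xy ⊗ z + (-1)^{|y||x|} yz ⊗ x + (-1)^{|z||y|} zx ⊗ y`
for homogeneous `x, y, z ∈ A`. -/
def cycRel (A : Type) [AddCommGroup A] [Module k A] (mul : A → A → A) (s : A → A) :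
    Submodule k (A ⊗[k] A) :=
  Submodule.span k
    {w | (∃ x y : A, ∃ px py : ZMod 2,
            s x = ((-1 : ℤ) ^ px.val) • x ∧ s y = ((-1 : ℤ) ^ py.val) • y ∧
            w = x ⊗ₜ[k] y + ((-1 : ℤ) ^ (px * py).val) • (y ⊗ₜ[k] x)) ∨
         (∃ x y z : A, ∃ px py pz : ZMod 2,
            s x = ((-1 : ℤ) ^ px.val) • x ∧ s y = ((-1 : ℤ) ^ py.val) • y ∧
            s z = ((-1 : ℤ) ^ pz.val) • z ∧
            w = ((-1 : ℤ) ^ (px * pz).val) • (mul x y ⊗ₜ[k] z)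
              + ((-1 : ℤ) ^ (py * px).val) • (mul y z ⊗ₜ[k] x)
              + ((-1 : ℤ) ^ (pz * py).val) • (mul z x ⊗ₜ[k] y))}

/-- `⟨x, y⟩`, the class of `x ⊗ y` in `⟨A, A⟩ = (A ⊗ A)/I_A`. -/
noncomputable def hcl (A : Type) [AddCommGroup A] [Module k A] (mul : A → A → A) (s : A → A) (x y : A) :
    (A ⊗[k] A) ⧸ cycRel (k := k) A mul s :=
  Submodule.Quotient.mk (x ⊗ₜ[k] y)

/-- In `⟨R⊗Q1, R⊗Q1⟩`, for even `a, b ∈ R`: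
`h(a⊗1, b⊗1) = ½ h([a,b]⊗ν, 1⊗ν)` and `h(a⊗ν, b⊗ν) = ½ h({a,b}⊗ν, 1⊗ν)`,
where `[a,b] = ab - ba` and `{a,b} = ab + ba`. -/
theorem hcl_even_formulas (σ : R ≃ₐ[k] R) (hσ : ∀ a, σ (σ a) = a) (a b : R)
    (ha : σ a = a) (hb : σ b = b) :
    hcl (k := k) (R × R) (mulQ σ) (tauQ σ) (a, 0) (b, 0)
      = (⅟(2 : k)) • hcl (k := k) (R × R) (mulQ σ) (tauQ σ) (0, a * b - b * a) (0, 1) ∧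
    hcl (k := k) (R × R) (mulQ σ) (tauQ σ) (0, a) (0, b)
      = (⅟(2 : k)) • hcl (k := k) (R × R) (mulQ σ) (tauQ σ) (0, a * b + b * a) (0, 1) := by
  classical
  set I := cycRel (k := k) (R × R) (mulQ σ) (tauQ σ) with hI
  have z0 : ((0 : ZMod 2)).val = 0 := rfl
  have z1 : ((1 : ZMod 2)).val = 1 := rfl
  have z00 : (((0 : ZMod 2)) * 0).val = 0 := rfl
  have z01 : (((0 : ZMod 2)) * 1).val = 0 := rfl
  have z10 : (((1 : ZMod 2)) * 0).val = 0 := rfl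
  have z11 : (((1 : ZMod 2)) * 1).val = 1 := rfl
  -- parity facts
  have pe : ∀ c : R, σ c = c →
      tauQ σ ((c, 0) : R × R) = ((-1 : ℤ) ^ ((0 : ZMod 2)).val) • ((c, 0) : R × R) := by
    intro c hc; simp [tauQ, hc]
  have po : ∀ c : R, σ c = c →
      tauQ σ ((0, c) : R × R) = ((-1 : ℤ) ^ ((1 : ZMod 2)).val) • ((0, c) : R × R) := by
    intro c hc
    simp only [tauQ, hc, z1, pow_one, neg_one_zsmul, Prod.neg_mk, map_zero, neg_zero]
  -- generators
  have hG1 : (((0, a*b) : R × R) ⊗ₜ[k] ((0,1) : R × R)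
      + ((b,0) : R × R) ⊗ₜ[k] ((a,0) : R × R)
      - ((0,a) : R × R) ⊗ₜ[k] ((0,b) : R × R)) ∈ I := by
    apply Submodule.subset_span
    refine Or.inr ⟨(a,0), (0,b), (0,1), 0, 1, 1, pe a ha, po b hb, po 1 (map_one σ), ?_⟩
    have e1 : mulQ σ ((a,0) : R × R) ((0,b) : R × R) = (0, a*b) := by simp [mulQ]
    have e2 : mulQ σ ((0,b) : R × R) ((0,1) : R × R) = (b, 0) := by simp [mulQ]
    have e3 : mulQ σ ((0,1) : R × R) ((a,0) : R × R) = (0, a) := by simp [mulQ, ha]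
    rw [e1, e2, e3, z01, z10, z11, pow_zero, pow_one, one_smul, neg_one_zsmul,
      sub_eq_add_neg]
    module
  have hG2 : (((0, b*a) : R × R) ⊗ₜ[k] ((0,1) : R × R)
      + ((a,0) : R × R) ⊗ₜ[k] ((b,0) : R × R)
      - ((0,b) : R × R) ⊗ₜ[k] ((0,a) : R × R)) ∈ I := by
    apply Submodule.subset_span
    refine Or.inr ⟨(b,0), (0,a), (0,1), 0, 1, 1, pe b hb, po a ha, po 1 (map_one σ), ?_⟩
    have e1 : mulQ σ ((b,0) : R × R) ((0,a) : R × R) = (0, b*a) := by simp [mulQ]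
    have e2 : mulQ σ ((0,a) : R × R) ((0,1) : R × R) = (a, 0) := by simp [mulQ]
    have e3 : mulQ σ ((0,1) : R × R) ((b,0) : R × R) = (0, b) := by simp [mulQ, hb]
    rw [e1, e2, e3, z01, z10, z11, pow_zero, pow_one, one_smul, neg_one_zsmul,
      sub_eq_add_neg]
    module
  have hS1 : (((b,0) : R × R) ⊗ₜ[k] ((a,0) : R × R)
      + ((a,0) : R × R) ⊗ₜ[k] ((b,0) : R × R)) ∈ I := by
    apply Submodule.subset_span
    refine Or.inl ⟨(b,0), (a,0), 0, 0, pe b hb, pe a ha, ?_⟩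
    rw [z00, pow_zero, one_smul]
  have hS2 : (((0,a) : R × R) ⊗ₜ[k] ((0,b) : R × R)
      - ((0,b) : R × R) ⊗ₜ[k] ((0,a) : R × R)) ∈ I := by
    apply Submodule.subset_span
    refine Or.inl ⟨(0,a), (0,b), 1, 1, po a ha, po b hb, ?_⟩
    rw [z11, pow_one, neg_one_zsmul, sub_eq_add_neg]
  have key1 : (((0, a*b - b*a) : R × R) ⊗ₜ[k] ((0,1) : R × R)
      - (2 : k) • (((a,0) : R × R) ⊗ₜ[k] ((b,0) : R × R))) ∈ I := by
    have hmem := add_mem (sub_mem (sub_mem hG1 hG2) hS1) hS2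
    have e : ((0, a*b - b*a) : R × R) = ((0, a*b) : R × R) - ((0, b*a) : R × R) := by
      simp [Prod.ext_iff]
    rw [e, sub_tmul]
    convert hmem using 1
    module
  have key2 : (((0, a*b + b*a) : R × R) ⊗ₜ[k] ((0,1) : R × R)
      - (2 : k) • (((0,a) : R × R) ⊗ₜ[k] ((0,b) : R × R))) ∈ I := by
    have hmem := sub_mem (sub_mem (add_mem hG1 hG2) hS1) hS2
    have e : ((0, a*b + b*a) : R × R) = ((0, a*b) : R × R) + ((0, b*a) : R × R) := by
      simp [Prod.ext_iff]
    rw [e, add_tmul]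
    convert hmem using 1
    module
  constructor
  · have q1 : hcl (k := k) (R × R) (mulQ σ) (tauQ σ) (0, a * b - b * a) (0, 1)
        = (2 : k) • hcl (k := k) (R × R) (mulQ σ) (tauQ σ) (a, 0) (b, 0) := by
      unfold hcl
      rw [← Submodule.Quotient.mk_smul]
      exact (Submodule.Quotient.eq _).2 key1
    rw [q1, invOf_smul_smul]
  · have q2 : hcl (k := k) (R × R) (mulQ σ) (tauQ σ) (0, a * b + b * a) (0, 1)
        = (2 : k) • hcl (k := k) (R × R) (mulQ σ) (tauQ σ) (0, a) (0, b) := by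
      unfold hcl
      rw [← Submodule.Quotient.mk_smul]
      exact (Submodule.Quotient.eq _).2 key2
    rw [q2, invOf_smul_smul]
end
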